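/- In the prize-collecting dual-charging algorithm, where elements arrive with penalties and each arriving element (e,p) has its dual variable y_{(e,p)} raised until some constraint becomes tight, the total penalty paid equals the sum of dual variables of elements for which the singleton-set constraint became tight, and this is at most the optimal fractional cost of the instance presented: c(ALG_pen) ≤ opt_frac. -/
import Mathlib


open Finset
open scoped Classical

/-- Prize-collecting dual charging: arrivals `i : ι` carry penalties `p i` and dual
variables `y i`; the dual is feasible for the auxiliary instance (singleton constraints
`y i ≤ p i` and set constraints).  The algorithm pays the penalty exactly for those
arrivals whose singleton constraint is tight (`y i = p i`).  Then the total penalty paid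
is at most the cost of any feasible fractional solution `(x, z)` of the auxiliary
instance, i.e. `c(ALG_pen) ≤ opt_frac`. -/
theorem prize_collecting_penalty_bound {α ι : Type*} [Fintype ι] [DecidableEq α]
    (𝒮 : Finset (Finset α)) (cost : Finset α → ℝ) (p : ι → ℝ) (elem : ι → α)
    (y : ι → ℝ) (hy : ∀ i, 0 ≤ y i)
    (hsing : ∀ i, y i ≤ p i)
    (hsets : ∀ S ∈ 𝒮, ∑ i ∈ Finset.univ.filter (fun i => elem i ∈ S), y i ≤ cost S)
    (x : Finset α → ℝ) (z : ι → ℝ)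
    (hx : ∀ S, 0 ≤ x S) (hz : ∀ i, 0 ≤ z i)
    (hcover : ∀ i, 1 ≤ z i + ∑ S ∈ 𝒮.filter (fun S => elem i ∈ S), x S) :
    (∑ i ∈ Finset.univ.filter (fun i => y i = p i), p i)
      ≤ (∑ S ∈ 𝒮, cost S * x S) + ∑ i, p i * z i := by
  have h1 : (∑ i ∈ Finset.univ.filter (fun i => y i = p i), p i) ≤ ∑ i, y i := by
    calc (∑ i ∈ Finset.univ.filter (fun i => y i = p i), p i)
        = ∑ i ∈ Finset.univ.filter (fun i => y i = p i), y i := by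
          apply Finset.sum_congr rfl
          intro i hi
          exact ((Finset.mem_filter.mp hi).2).symm
      _ ≤ ∑ i, y i := Finset.sum_le_sum_of_subset_of_nonneg (Finset.filter_subset _ _)
          (fun i _ _ => hy i)
  have h2 : ∑ i, y i ≤ ∑ i, y i * (z i + ∑ S ∈ 𝒮.filter (fun S => elem i ∈ S), x S) := by
    apply Finset.sum_le_sum
    intro i _
    nlinarith [hy i, hcover i]
  have h3 : ∑ i, y i * (z i + ∑ S ∈ 𝒮.filter (fun S => elem i ∈ S), x S)
      = (∑ i, y i * z i) + ∑ S ∈ 𝒮, (∑ i ∈ Finset.univ.filter (fun i => elem i ∈ S), y i) * x S := by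
    simp_rw [mul_add, Finset.sum_add_distrib]
    congr 1
    simp_rw [Finset.mul_sum, Finset.sum_mul, Finset.sum_filter]
    rw [Finset.sum_comm]
  rw [h3] at h2
  have h4 : ∑ i, y i * z i ≤ ∑ i, p i * z i :=
    Finset.sum_le_sum fun i _ => mul_le_mul_of_nonneg_right (hsing i) (hz i)
  have h5 : ∑ S ∈ 𝒮, (∑ i ∈ Finset.univ.filter (fun i => elem i ∈ S), y i) * x S
      ≤ ∑ S ∈ 𝒮, cost S * x S :=
    Finset.sum_le_sum fun S hS => mul_le_mul_of_nonneg_right (hsets S hS) (hx S)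
  linarith
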